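/- On the complex C = CFK^∞(10_161) in its split form, let ι be the involution with ι(x_6) = U^{-1}x_{-6} (and values on the other generators as specified), and let ι' be the map that agrees with ι on all generators except ι'(x_6) = U^{-1}x_{-6} + U^{-1}x_3. Then ι' is also a grading-preserving, skew-filtered chain map, and ι and ι' are chain homotopic: defining the F2[U,U^{-1}]-linear map G by G(x_1') = U^{-2}x_3 and G = 0 on all other generators, G is skew-filtered, raises the homological grading by 1, and satisfies ∂G + G∂ = ι + ι' (equivalently ι - ι', over F2). -/

import Mathlib

/- STATEMENT 14: on CFK^∞(10_161) in split form, with ι the involution (with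
ι(x₆) = U⁻¹x₋₆) and ι' the map agreeing with ι except
ι'(x₆) = U⁻¹x₋₆ + U⁻¹x₃, the map ι' is also a grading-preserving,
skew-filtered chain map, and the map G with G(x₁') = U⁻²x₃ and G = 0 on all
other generators is skew-filtered, raises the homological grading by 1, and
satisfies ∂G + G∂ = ι + ι'. -/

open LaurentPolynomial

noncomputable section

/-- F2[U, U⁻¹] -/
abbrev L2 : Type := LaurentPolynomial (ZMod 2)

/-- the variable U = T 1 -/
def UL : L2 := T 1

/-- the i-th free generator -/
def gen {n : ℕ} (i : Fin n) : Fin n → L2 := Pi.single i 1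

/-- the F2[U,U⁻¹]-linear map sending the i-th generator to `v i` -/
def mkL {n : ℕ} (v : Fin n → (Fin n → L2)) : (Fin n → L2) →ₗ[L2] (Fin n → L2) :=
  (Pi.basisFun L2 (Fin n)).constr ℕ v

/-- `x` is homogeneous of homological degree `r` -/
def HomogL {n : ℕ} (M : Fin n → ℤ) (r : ℤ) (x : Fin n → L2) : Prop :=
  x ∈ Submodule.span (ZMod 2)
    {v : Fin n → L2 | ∃ (i : Fin n) (k : ℤ), M i - 2 * k = r ∧ v = (T k : L2) • gen i}

/-- every term of `x` has planar coordinates coordinatewise ≤ `st`. -/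
def BelowL {n : ℕ} (P : Fin n → ℤ × ℤ) (st : ℤ × ℤ) (x : Fin n → L2) : Prop :=
  x ∈ Submodule.span (ZMod 2)
    {v : Fin n → L2 | ∃ (i : Fin n) (k : ℤ),
      (P i).1 - k ≤ st.1 ∧ (P i).2 - k ≤ st.2 ∧ v = (T k : L2) • gen i}

/- generators of CFK^∞(10_161) in split form:
   x₋₄ = 0, x₋₃ = 1, x₀ = 2, x₃ = 3, x₄ = 4, x₆ = 5, x₁' = 6, x₂' = 7,
   x₅' = 8, x₋₆ = 9, x₋₁' = 10, x₋₂' = 11, x₋₅' = 12 -/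

/-- the split-form differential -/
def d : (Fin 13 → L2) →ₗ[L2] (Fin 13 → L2) :=
  mkL ![gen 1, 0, UL ^ 2 • gen 1 + gen 3, 0, UL • gen 3,
        UL • gen 6 + gen 8, gen 7, 0, UL • gen 7,
        gen 10 + UL • gen 12, UL • gen 11, 0, gen 11]

/-- homological gradings -/
def M : Fin 13 → ℤ := ![6, 5, 2, 1, 0, 3, 4, 3, 2, 1, 0, 1, 2]

/-- planar bigradings -/
def P : Fin 13 → ℤ × ℤ :=
  ![(0, 3), (0, 2), (0, 0), (0, -2), (0, -3), (0, 1), (0, 2), (0, 1),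
    (0, 0), (0, -1), (0, -2), (0, -1), (0, 0)]

/-- the involution ι, with ι(x₆) = U⁻¹x₋₆ -/
def iota : (Fin 13 → L2) →ₗ[L2] (Fin 13 → L2) :=
  mkL ![(T (-3) : L2) • gen 4, (T (-2) : L2) • gen 3, gen 2,
        UL ^ 2 • gen 1, UL ^ 3 • gen 0,
        (T (-1) : L2) • gen 9,
        (T (-2) : L2) • gen 10, (T (-1) : L2) • gen 11, gen 12,
        UL • gen 5 + UL • gen 7, UL ^ 2 • gen 6, UL • gen 7, gen 8]

/-- the map ι', agreeing with ι except ι'(x₆) = U⁻¹x₋₆ + U⁻¹x₃ -/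
def iota' : (Fin 13 → L2) →ₗ[L2] (Fin 13 → L2) :=
  mkL ![(T (-3) : L2) • gen 4, (T (-2) : L2) • gen 3, gen 2,
        UL ^ 2 • gen 1, UL ^ 3 • gen 0,
        (T (-1) : L2) • gen 9 + (T (-1) : L2) • gen 3,
        (T (-2) : L2) • gen 10, (T (-1) : L2) • gen 11, gen 12,
        UL • gen 5 + UL • gen 7, UL ^ 2 • gen 6, UL • gen 7, gen 8]

/-- the homotopy G, with G(x₁') = U⁻²x₃ and G = 0 on the other generators -/
def G : (Fin 13 → L2) →ₗ[L2] (Fin 13 → L2) :=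
  mkL ![0, 0, 0, 0, 0, 0, (T (-2) : L2) • gen 3, 0, 0, 0, 0, 0, 0]

/-
Linear maps out of the free module agree once they agree on the generators, and the homological
grading is spanned by the monomials `U^k • xᵢ`, so a linear map shifts it uniformly as soon as it
does so on generators. Everything therefore reduces to a finite computation on the thirteen
generators in `F₂[U, U⁻¹]`. In `∂G + G∂` only `x₆` survives, and there
`G ∂ x₆ = G (U x₁' + x₅') = U · U⁻² x₃ = U⁻¹ x₃ = (ι + ι') x₆`; every other term cancels in
characteristic two.
-/

section Generators

variable {n : ℕ}

@[simp] theorem mkL_gen (v : Fin n → Fin n → L2) (i : Fin n) : mkL v (gen i) = v i := by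
  rw [mkL, gen, ← Pi.basisFun_apply, Module.Basis.constr_basis]

theorem linearMap_ext_gen {f g : (Fin n → L2) →ₗ[L2] (Fin n → L2)}
    (h : ∀ i, f (gen i) = g (gen i)) : f = g :=
  (Pi.basisFun L2 (Fin n)).ext fun i => by rw [Pi.basisFun_apply]; exact h i

end Generators

section Grading

variable {n : ℕ} {deg : Fin n → ℤ}

theorem homogL_T_smul_gen {i : Fin n} {k r : ℤ} (h : deg i - 2 * k = r) :
    HomogL deg r ((T k : L2) • gen i) :=
  Submodule.subset_span ⟨i, k, h, rfl⟩

theorem homogL_gen {i : Fin n} {r : ℤ} (h : deg i = r) : HomogL deg r (gen i) := by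
  simpa using homogL_T_smul_gen (deg := deg) (i := i) (k := 0) (by simpa using h)

theorem HomogL.T_smul {r : ℤ} {x : Fin n → L2} (hx : HomogL deg r x) (k : ℤ) :
    HomogL deg (r - 2 * k) ((T k : L2) • x) := by
  induction hx using Submodule.span_induction with
  | mem v hv =>
    obtain ⟨i, l, rfl, rfl⟩ := hv
    rw [smul_smul, ← T_add]
    exact homogL_T_smul_gen (by ring)
  | zero => rw [smul_zero]; exact Submodule.zero_mem _
  | add x y _ _ hx hy => rw [smul_add]; exact Submodule.add_mem _ hx hy
  | smul c x _ hx => rw [smul_comm]; exact Submodule.smul_mem _ c hx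

theorem HomogL.map_of_gen {f : (Fin n → L2) →ₗ[L2] (Fin n → L2)} {s : ℤ}
    (hf : ∀ i, HomogL deg (deg i + s) (f (gen i))) {r : ℤ} {x : Fin n → L2}
    (hx : HomogL deg r x) : HomogL deg (r + s) (f x) := by
  induction hx using Submodule.span_induction with
  | mem v hv =>
    obtain ⟨i, k, rfl, rfl⟩ := hv
    rw [map_smul]
    convert (hf i).T_smul k using 1
    ring
  | zero => rw [map_zero]; exact Submodule.zero_mem _
  | add x y _ _ hx hy => rw [map_add]; exact Submodule.add_mem _ hx hy
  | smul c x _ hx => rw [LinearMap.map_smul_of_tower]; exact Submodule.smul_mem _ c hx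

end Grading

section Filtration

variable {n : ℕ} {pos : Fin n → ℤ × ℤ} {st : ℤ × ℤ}

theorem belowL_T_smul_gen {i : Fin n} {k : ℤ} (h₁ : (pos i).1 - k ≤ st.1)
    (h₂ : (pos i).2 - k ≤ st.2) : BelowL pos st ((T k : L2) • gen i) :=
  Submodule.subset_span ⟨i, k, h₁, h₂, rfl⟩

theorem belowL_gen {i : Fin n} (h₁ : (pos i).1 ≤ st.1) (h₂ : (pos i).2 ≤ st.2) :
    BelowL pos st (gen i) := by
  simpa using belowL_T_smul_gen (pos := pos) (i := i) (k := 0) (by simpa using h₁)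
    (by simpa using h₂)

end Filtration

theorem iota'_comp_d : iota' ∘ₗ d = d ∘ₗ iota' := by
  refine linearMap_ext_gen fun i => ?_
  fin_cases i <;>
    simp only [LinearMap.comp_apply, d, iota', mkL_gen, map_add, map_smul, map_zero,
      Fin.reduceFinMk, Fin.isValue, Matrix.cons_val] <;>
    simp only [UL, T_pow, smul_add, smul_zero, add_zero, smul_smul, ← T_add] <;>
    norm_num [add_comm]

theorem d_comp_G_add_G_comp_d : d ∘ₗ G + G ∘ₗ d = iota + iota' := by
  refine linearMap_ext_gen fun i => ?_
  fin_cases i <;>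
    simp only [LinearMap.add_apply, LinearMap.comp_apply, d, iota, iota', G, mkL_gen, map_add,
      map_smul, map_zero, Fin.reduceFinMk, Fin.isValue, Matrix.cons_val] <;>
    simp only [UL, T_pow, smul_zero, add_zero, zero_add, smul_smul, ← T_add] <;>
    norm_num [← add_assoc, ZModModule.add_self]

theorem homogL_iota'_gen (i : Fin 13) : HomogL M (M i) (iota' (gen i)) := by
  fin_cases i <;>
    simp only [iota', mkL_gen, Fin.reduceFinMk, Fin.isValue, Matrix.cons_val, UL, T_pow] <;>
    apply_rules [Submodule.add_mem, homogL_T_smul_gen, homogL_gen]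

theorem homogL_G_gen (i : Fin 13) : HomogL M (M i + 1) (G (gen i)) := by
  fin_cases i <;>
    simp only [G, mkL_gen, Fin.reduceFinMk, Fin.isValue, Matrix.cons_val] <;>
    apply_rules [Submodule.zero_mem, homogL_T_smul_gen]

theorem belowL_iota'_gen (i : Fin 13) : BelowL P ((P i).2, (P i).1) (iota' (gen i)) := by
  fin_cases i <;>
    simp only [iota', mkL_gen, Fin.reduceFinMk, Fin.isValue, Matrix.cons_val, UL, T_pow] <;>
    apply_rules [Submodule.add_mem, belowL_T_smul_gen, belowL_gen] <;> decide

theorem belowL_G_gen (i : Fin 13) : BelowL P ((P i).2, (P i).1) (G (gen i)) := by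
  fin_cases i <;>
    simp only [G, mkL_gen, Fin.reduceFinMk, Fin.isValue, Matrix.cons_val] <;>
    apply_rules [Submodule.zero_mem, belowL_T_smul_gen] <;> decide

theorem stmt_14 :
    -- ι' is a chain map
    iota' ∘ₗ d = d ∘ₗ iota' ∧
    -- ι' preserves the homological grading M
    (∀ (r : ℤ) (x : Fin 13 → L2), HomogL M r x → HomogL M r (iota' x)) ∧
    -- ι' is skew-filtered
    (∀ i : Fin 13, BelowL P ((P i).2, (P i).1) (iota' (gen i))) ∧
    -- G is skew-filtered
    (∀ i : Fin 13, BelowL P ((P i).2, (P i).1) (G (gen i))) ∧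
    -- G raises the homological grading by 1
    (∀ (r : ℤ) (x : Fin 13 → L2), HomogL M r x → HomogL M (r + 1) (G x)) ∧
    -- ∂G + G∂ = ι + ι'
    d ∘ₗ G + G ∘ₗ d = iota + iota' :=
  ⟨iota'_comp_d,
    fun _ _ hx => by simpa using hx.map_of_gen (s := 0) (by simpa using homogL_iota'_gen),
    belowL_iota'_gen, belowL_G_gen,
    fun _ _ hx => hx.map_of_gen homogL_G_gen,
    d_comp_G_add_G_comp_d⟩
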